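/- Let B ∈ ℂ^{n×n} be Hermitian positive definite, p ∈ ℂ^n nonzero, and c > 0 with c · pᴴ B⁻¹ p constrained by B - c·p pᴴ positive definite. Then the maximum over nonzero w of (c|wᴴp|²)/(wᴴ(B - c·ppᴴ)w) equals c·pᴴ B⁻¹ p / (1 - c·pᴴ B⁻¹ p), attained at w = (B - c·ppᴴ)⁻¹ p. -/

import Mathlib

/-!
Write `A = B - c ppᴴ` and `ρ = pᴴA⁻¹p`. Cauchy–Schwarz for the inner product `⟪u, v⟫ = uᴴAv`,
applied to `w` and `A⁻¹p`, gives `|wᴴp|² ≤ (wᴴAw) ρ`, with equality at `w = A⁻¹p`; so the maximal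
SINR is `c ρ`. Since `B A⁻¹p = (1 + c ρ) p`, we get `ρ = (1 + c ρ) pᴴB⁻¹p`, which is the
Sherman–Morrison formula `ρ = s / (1 - c s)` for `s = pᴴB⁻¹p`.
-/

open Matrix ComplexOrder

namespace Matrix

variable {ι : Type*} [Fintype ι]

section CommRing

variable {R : Type*} [CommRing R] [DecidableEq ι]

theorem mulVec_nonsing_inv_mulVec {A : Matrix ι ι R} (hA : IsUnit A) (v : ι → R) :
    A *ᵥ (A⁻¹ *ᵥ v) = v := by
  rw [mulVec_mulVec, mul_nonsing_inv _ ((isUnit_iff_isUnit_det A).1 hA), one_mulVec]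

theorem nonsing_inv_mulVec_mulVec {A : Matrix ι ι R} (hA : IsUnit A) (v : ι → R) :
    A⁻¹ *ᵥ (A *ᵥ v) = v := by
  rw [mulVec_mulVec, nonsing_inv_mul _ ((isUnit_iff_isUnit_det A).1 hA), one_mulVec]

theorem dotProduct_inv_sub_smul_vecMulVec_mul {B : Matrix ι ι R} {c : R} {u v : ι → R}
    (hB : IsUnit B) (hA : IsUnit (B - c • vecMulVec u v)) :
    v ⬝ᵥ ((B - c • vecMulVec u v)⁻¹ *ᵥ u) * (1 - c * (v ⬝ᵥ (B⁻¹ *ᵥ u))) =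
      v ⬝ᵥ (B⁻¹ *ᵥ u) := by
  set A := B - c • vecMulVec u v
  set x := A⁻¹ *ᵥ u
  have hBx : B *ᵥ x = (1 + c * (v ⬝ᵥ x)) • u := by
    rw [← sub_add_cancel B (c • vecMulVec u v), add_mulVec, mulVec_nonsing_inv_mulVec hA,
      smul_mulVec, vecMulVec_mulVec, op_smul_eq_smul, add_smul, one_smul, mul_smul]
  have hx : x = (1 + c * (v ⬝ᵥ x)) • (B⁻¹ *ᵥ u) := by
    rw [← mulVec_smul, ← hBx, nonsing_inv_mulVec_mulVec hB]
  have hvx := congrArg (v ⬝ᵥ ·) hx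
  simp only [dotProduct_smul, smul_eq_mul] at hvx
  linear_combination hvx

end CommRing

variable {𝕜 : Type*} [RCLike 𝕜]

theorem IsHermitian.star_dotProduct_mulVec {M : Matrix ι ι 𝕜} (hM : M.IsHermitian)
    (u v : ι → 𝕜) : star (star u ⬝ᵥ (M *ᵥ v)) = star v ⬝ᵥ (M *ᵥ u) := by
  rw [star_dotProduct, star_star, star_mulVec, hM.eq, ← dotProduct_mulVec]

theorem re_star_dotProduct_comm (x y : ι → 𝕜) :
    RCLike.re (star x ⬝ᵥ y) = RCLike.re (star y ⬝ᵥ x) := by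
  rw [star_dotProduct, RCLike.star_def, RCLike.conj_re]

theorem PosSemidef.norm_dotProduct_mulVec_sq_le {M : Matrix ι ι 𝕜} (hM : M.PosSemidef)
    (u v : ι → 𝕜) :
    ‖star u ⬝ᵥ (M *ᵥ v)‖ ^ 2 ≤
      RCLike.re (star u ⬝ᵥ (M *ᵥ u)) * RCLike.re (star v ⬝ᵥ (M *ᵥ v)) := by
  let := M.toSeminormedAddCommGroup hM
  let := M.toInnerProductSpace hM
  have h : ‖(M *ᵥ v) ⬝ᵥ star u‖ * ‖(M *ᵥ u) ⬝ᵥ star v‖ ≤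
      RCLike.re ((M *ᵥ u) ⬝ᵥ star u) * RCLike.re ((M *ᵥ v) ⬝ᵥ star v) :=
    inner_mul_inner_self_le (𝕜 := 𝕜) u v
  simp only [dotProduct_comm (M *ᵥ _)] at h
  rwa [← hM.isHermitian.star_dotProduct_mulVec u v, norm_star, ← sq] at h

variable [DecidableEq ι]

theorem PosDef.norm_dotProduct_sq_div_le {M : Matrix ι ι 𝕜} (hM : M.PosDef) {w : ι → 𝕜}
    (hw : w ≠ 0) (p : ι → 𝕜) :
    ‖star w ⬝ᵥ p‖ ^ 2 / RCLike.re (star w ⬝ᵥ (M *ᵥ w)) ≤ RCLike.re (star p ⬝ᵥ (M⁻¹ *ᵥ p)) := by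
  have hCS := hM.posSemidef.norm_dotProduct_mulVec_sq_le w (M⁻¹ *ᵥ p)
  rw [mulVec_nonsing_inv_mulVec hM.isUnit, re_star_dotProduct_comm (M⁻¹ *ᵥ p)] at hCS
  rwa [div_le_iff₀' (hM.re_dotProduct_pos hw)]

theorem PosDef.norm_dotProduct_sq_div_eq {M : Matrix ι ι 𝕜} (hM : M.PosDef) (p : ι → 𝕜) :
    ‖star (M⁻¹ *ᵥ p) ⬝ᵥ p‖ ^ 2 / RCLike.re (star (M⁻¹ *ᵥ p) ⬝ᵥ (M *ᵥ (M⁻¹ *ᵥ p))) =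
      RCLike.re (star p ⬝ᵥ (M⁻¹ *ᵥ p)) := by
  have him := hM.inv.isHermitian.im_star_dotProduct_mulVec_self p
  rw [mulVec_nonsing_inv_mulVec hM.isUnit, re_star_dotProduct_comm, star_dotProduct, norm_star,
    RCLike.norm_sq_eq_def, him, mul_zero, add_zero, mul_self_div_self]

end Matrix

theorem sinr_max_rank_one_general (n : ℕ) (B : Matrix (Fin n) (Fin n) ℂ)
    (hB : B.PosDef) (p : Fin n → ℂ) (c : ℝ) (hc : 0 < c)
    (hBc : (B - (c : ℂ) • vecMulVec p (star p)).PosDef) :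
    (∀ w : Fin n → ℂ, w ≠ 0 →
        c * ‖star w ⬝ᵥ p‖ ^ 2 /
            (star w ⬝ᵥ ((B - (c : ℂ) • vecMulVec p (star p)) *ᵥ w)).re ≤
          c * (star p ⬝ᵥ (B⁻¹ *ᵥ p)).re / (1 - c * (star p ⬝ᵥ (B⁻¹ *ᵥ p)).re)) ∧
      (let w := (B - (c : ℂ) • vecMulVec p (star p))⁻¹ *ᵥ p;
        c * ‖star w ⬝ᵥ p‖ ^ 2 /
            (star w ⬝ᵥ ((B - (c : ℂ) • vecMulVec p (star p)) *ᵥ w)).re =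
          c * (star p ⬝ᵥ (B⁻¹ *ᵥ p)).re / (1 - c * (star p ⬝ᵥ (B⁻¹ *ᵥ p)).re)) := by
  set A := B - (c : ℂ) • vecMulVec p (star p)
  set ρ := star p ⬝ᵥ (A⁻¹ *ᵥ p)
  set s := star p ⬝ᵥ (B⁻¹ *ᵥ p)
  have hρ_im : ρ.im = 0 := hBc.inv.isHermitian.im_star_dotProduct_mulVec_self p
  have hρs : ρ * (1 - c * s) = s := dotProduct_inv_sub_smul_vecMulVec_mul hB.isUnit hBc.isUnit
  replace hρs : ρ.re * (1 - c * s.re) = s.re := by simpa [hρ_im] using congrArg Complex.re hρs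
  have hrhs : c * s.re / (1 - c * s.re) = c * ρ.re := by
    have hden : 1 - c * s.re ≠ 0 := fun h => by
      have : s.re = 0 := by simpa [h] using hρs.symm
      simp [this] at h
    rw [div_eq_iff hden]
    linear_combination (-c) * hρs
  simp only [hrhs, mul_div_assoc]
  refine ⟨fun w hw => ?_, ?_⟩
  · exact mul_le_mul_of_nonneg_left (hBc.norm_dotProduct_sq_div_le hw p) hc.le
  · exact congrArg (c * ·) (hBc.norm_dotProduct_sq_div_eq p)

/-- SINR maximization with a rank-one signal term subtracted: for Hermitian PD `B`,
`p ≠ 0`, `c > 0` with `B - c·ppᴴ` positive definite, the maximum over nonzero `w` of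
`c|wᴴp|² / (wᴴ(B - c·ppᴴ)w)` equals `c·pᴴB⁻¹p / (1 - c·pᴴB⁻¹p)`,
attained at `w = (B - c·ppᴴ)⁻¹ p`. -/
theorem sinr_max_rank_one (n : ℕ) (B : Matrix (Fin n) (Fin n) ℂ)
    (hB : B.PosDef) (p : Fin n → ℂ) (hp : p ≠ 0) (c : ℝ) (hc : 0 < c)
    (hBc : (B - (c : ℂ) • vecMulVec p (star p)).PosDef) :
    (∀ w : Fin n → ℂ, w ≠ 0 →
        c * ‖star w ⬝ᵥ p‖ ^ 2 /
            (star w ⬝ᵥ ((B - (c : ℂ) • vecMulVec p (star p)) *ᵥ w)).re ≤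
          c * (star p ⬝ᵥ (B⁻¹ *ᵥ p)).re / (1 - c * (star p ⬝ᵥ (B⁻¹ *ᵥ p)).re)) ∧
      (let w := (B - (c : ℂ) • vecMulVec p (star p))⁻¹ *ᵥ p;
        c * ‖star w ⬝ᵥ p‖ ^ 2 /
            (star w ⬝ᵥ ((B - (c : ℂ) • vecMulVec p (star p)) *ᵥ w)).re =
          c * (star p ⬝ᵥ (B⁻¹ *ᵥ p)).re / (1 - c * (star p ⬝ᵥ (B⁻¹ *ᵥ p)).re)) :=
  sinr_max_rank_one_general n B hB p c hc hBc
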